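/- Let $X \subseteq \mathbb{R}^n$ be closed convex with $\bar{x} \in X$, let $\zeta_i : \mathbb{R}^n \to \mathbb{R}$ be convex for $i$ in a finite index set $\mathcal{A}$, and let $g_i \in \mathbb{R}^n$ for $i \in \mathcal{A}$. Define $P = \{ \sum_{i \in \mathcal{A}} \lambda_i (g_i + v_i) + w : \lambda_i \ge 0, \ v_i \in \partial \zeta_i(\bar{x}), \ w \in \mathcal{N}_X(\bar{x}) \}$ and $C = \{ d \in \mathcal{T}_X(\bar{x}) : g_i^T d + \zeta_i'(\bar{x}; d) \le 0 \text{ for all } i \in \mathcal{A} \}$. Then the polar cone of $P$ equals $C$, i.e., $P^{\circ} = C$. -/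

import Mathlib

open Set

variable {n : ℕ}

/-- Convex subdifferential of a finite convex function. -/
def subdiff (ζ : EuclideanSpace ℝ (Fin n) → ℝ) (x : EuclideanSpace ℝ (Fin n)) :
    Set (EuclideanSpace ℝ (Fin n)) :=
  {v | ∀ y, ζ x + (inner ℝ v (y - x) : ℝ) ≤ ζ y}

/-- Directional derivative of a convex function, as the support function of the
subdifferential: `ζ'(x; d) = max {⟨v, d⟩ : v ∈ ∂ζ(x)}`. -/
noncomputable def dirDerivSub (ζ : EuclideanSpace ℝ (Fin n) → ℝ)
    (x d : EuclideanSpace ℝ (Fin n)) : ℝ :=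
  sSup {r : ℝ | ∃ v ∈ subdiff ζ x, r = (inner ℝ v d : ℝ)}

/-- Normal cone of a convex set `X` at `x`. -/
def normalCone (X : Set (EuclideanSpace ℝ (Fin n))) (x : EuclideanSpace ℝ (Fin n)) :
    Set (EuclideanSpace ℝ (Fin n)) :=
  {v | ∀ y ∈ X, (inner ℝ v (y - x) : ℝ) ≤ 0}

/-- Tangent cone of a convex set `X` at `x`: closure of the cone of feasible directions. -/
def tangentConeConvex (X : Set (EuclideanSpace ℝ (Fin n))) (x : EuclideanSpace ℝ (Fin n)) :
    Set (EuclideanSpace ℝ (Fin n)) :=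
  closure {d | ∃ τ : ℝ, 0 ≤ τ ∧ ∃ y ∈ X, d = τ • (y - x)}

/-- Polar cone. -/
def polarCone (S : Set (EuclideanSpace ℝ (Fin n))) : Set (EuclideanSpace ℝ (Fin n)) :=
  {d | ∀ u ∈ S, (inner ℝ u d : ℝ) ≤ 0}

/-- The cone `P` of aggregated subgradients plus normal directions. -/
def Pcone {ι : Type} [Fintype ι] (g : ι → EuclideanSpace ℝ (Fin n))
    (ζ : ι → EuclideanSpace ℝ (Fin n) → ℝ) (X : Set (EuclideanSpace ℝ (Fin n)))
    (xbar : EuclideanSpace ℝ (Fin n)) : Set (EuclideanSpace ℝ (Fin n)) :=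
  {u | ∃ (lam : ι → ℝ) (v : ι → EuclideanSpace ℝ (Fin n)) (w : EuclideanSpace ℝ (Fin n)),
    (∀ i, 0 ≤ lam i) ∧ (∀ i, v i ∈ subdiff (ζ i) xbar) ∧ w ∈ normalCone X xbar ∧
    u = (∑ i, lam i • (g i + v i)) + w}

/-- The linearized cone `C`. -/
noncomputable def Ccone {ι : Type} [Fintype ι] (g : ι → EuclideanSpace ℝ (Fin n))
    (ζ : ι → EuclideanSpace ℝ (Fin n) → ℝ) (X : Set (EuclideanSpace ℝ (Fin n)))
    (xbar : EuclideanSpace ℝ (Fin n)) : Set (EuclideanSpace ℝ (Fin n)) :=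
  {d | d ∈ tangentConeConvex X xbar ∧
    ∀ i, (inner ℝ (g i) d : ℝ) + dirDerivSub (ζ i) xbar d ≤ 0}

/-
The cone `P` is generated by the normal cone `N_X(x̄)` and the vectors `g i + v`,
`v ∈ ∂ζ i (x̄)`, so `d ∈ P°` iff `d` is nonpositive against each generator. Against
`N_X(x̄)` this means `d ∈ N_X(x̄)° = T_X(x̄)`, the bipolar theorem for the closed cone
generated by `X - x̄` (Farkas separation). Against `g i + ∂ζ i (x̄)` it means
`⟪g i, d⟫ + ζ i'(x̄; d) ≤ 0`, since `ζ i'(x̄; ·)` is the supremum over the subdifferential,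
which is nonempty by Hahn–Banach separation from the open strict epigraph.
-/
open scoped RealInnerProductSpace

theorem ConvexOn.exists_subgradient_of_continuous {E : Type*} [NormedAddCommGroup E]
    [NormedSpace ℝ E] {f : E → ℝ} (hf : ConvexOn ℝ univ f) (hc : Continuous f) (x : E) :
    ∃ φ : StrongDual ℝ E, ∀ y, f x + φ (y - x) ≤ f y := by
  have hconv : Convex ℝ {p : E × ℝ | f p.1 < p.2} := by
    simpa using hf.convex_strict_epigraph
  have hopen : IsOpen {p : E × ℝ | f p.1 < p.2} :=
    isOpen_lt (hc.comp continuous_fst) continuous_snd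
  obtain ⟨φ, hφ⟩ := geometric_hahn_banach_point_open hconv hopen (x := (x, f x)) (by simp)
  set L := φ.comp (ContinuousLinearMap.inl ℝ E ℝ)
  set β := φ (0, 1)
  have hsplit : ∀ a t, φ (a, t) = L a + t * β := by
    intro a t
    rw [show (a, t) = (a, 0) + t • ((0 : E), (1 : ℝ)) by simp, map_add, map_smul, smul_eq_mul]
    rfl
  have hβ : 0 < β := by
    have := hφ (x, f x + 1) (by simp)
    rw [hsplit, hsplit] at this
    linarith
  have hsupport : ∀ y, L x + f x * β ≤ L y + f y * β := by
    intro y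
    refine le_of_forall_pos_lt_add fun ε hε => ?_
    have := hφ (y, f y + ε / β) (by simp [hε, hβ])
    rw [hsplit, hsplit, add_mul, div_mul_cancel₀ _ hβ.ne'] at this
    linarith
  -- `β > 0` says the supporting hyperplane is not vertical; its slope `-L / β` is the subgradient
  refine ⟨-β⁻¹ • L, fun y => ?_⟩
  have := hsupport y
  simp only [FunLike.coe_smul, Pi.smul_apply, map_sub, smul_eq_mul]
  field_simp
  linarith

theorem PointedCone.mem_closure_of_forall_inner_nonpos {E : Type*} [NormedAddCommGroup E]
    [InnerProductSpace ℝ E] [CompleteSpace E] (K : PointedCone ℝ E) {d : E}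
    (hd : ∀ u, (∀ k ∈ K, ⟪u, k⟫ ≤ 0) → ⟪u, d⟫ ≤ 0) : d ∈ closure (K : Set E) := by
  by_contra h
  obtain ⟨y, hyK, hyd⟩ := ProperCone.hyperplane_separation' (x₀ := d) (Submodule.closure K) h
  have := hd (-y) fun k hk => by
    simpa [inner_neg_left, real_inner_comm] using hyK k (subset_closure hk)
  rw [inner_neg_left, real_inner_comm] at this
  linarith

section Euclidean

variable {X : Set (EuclideanSpace ℝ (Fin n))} {x d : EuclideanSpace ℝ (Fin n)}

theorem isClosed_polarCone (S : Set (EuclideanSpace ℝ (Fin n))) : IsClosed (polarCone S) := by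
  simp only [polarCone, ofPred_forall]
  exact isClosed_biInter fun u _ => isClosed_le (by fun_prop) continuous_const

theorem tangentConeConvex_eq_polarCone_normalCone (hX : Convex ℝ X) (hx : x ∈ X) :
    tangentConeConvex X x = polarCone (normalCone X x) := by
  refine subset_antisymm (closure_minimal ?_ (isClosed_polarCone _)) fun d hd => ?_
  · rintro _ ⟨τ, hτ, y, hy, rfl⟩ u hu
    rw [real_inner_smul_right]
    exact mul_nonpos_of_nonneg_of_nonpos hτ (hu y hy)
  set S := (fun y => -x + y) '' X
  let K : PointedCone ℝ (EuclideanSpace ℝ (Fin n)) :=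
    (ConvexCone.hull ℝ S).toPointedCone (ConvexCone.subset_hull ⟨x, hx, neg_add_cancel x⟩)
  refine closure_mono ?_ (K.mem_closure_of_forall_inner_nonpos fun u hu => hd u fun y hy => ?_)
  · intro k hk
    obtain ⟨r, hr, _, ⟨y, hy, rfl⟩, rfl⟩ := (ConvexCone.mem_hull_of_convex (hX.translate (-x))).1 hk
    exact ⟨r, hr.le, y, hy, by simp only [neg_add_eq_sub]⟩
  · simpa [neg_add_eq_sub] using hu _ (ConvexCone.subset_hull ⟨y, hy, rfl⟩)

theorem subdiff_nonempty {ζ : EuclideanSpace ℝ (Fin n) → ℝ} (hζ : ConvexOn ℝ univ ζ)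
    (x : EuclideanSpace ℝ (Fin n)) : (subdiff ζ x).Nonempty := by
  obtain ⟨φ, hφ⟩ :=
    hζ.exists_subgradient_of_continuous (continuousOn_univ.1 (hζ.continuousOn isOpen_univ)) x
  exact ⟨(InnerProductSpace.toDual ℝ _).symm φ, fun y => by
    simpa only [InnerProductSpace.toDual_symm_apply] using hφ y⟩

theorem bddAbove_inner_subdiff (ζ : EuclideanSpace ℝ (Fin n) → ℝ)
    (x d : EuclideanSpace ℝ (Fin n)) :
    BddAbove {r : ℝ | ∃ v ∈ subdiff ζ x, r = ⟪v, d⟫} := by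
  refine ⟨ζ (x + d) - ζ x, ?_⟩
  rintro _ ⟨v, hv, rfl⟩
  have := hv (x + d)
  rw [add_sub_cancel_left] at this
  linarith

theorem dirDerivSub_le_iff {ζ : EuclideanSpace ℝ (Fin n) → ℝ} (hne : (subdiff ζ x).Nonempty)
    {c : ℝ} : dirDerivSub ζ x d ≤ c ↔ ∀ v ∈ subdiff ζ x, ⟪v, d⟫ ≤ c := by
  obtain ⟨v₀, hv₀⟩ := hne
  rw [dirDerivSub, csSup_le_iff (bddAbove_inner_subdiff ζ x d) ⟨_, v₀, hv₀, rfl⟩]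
  simp only [mem_ofPred_eq, forall_exists_index, and_imp]
  exact ⟨fun h v hv => h _ v hv rfl, fun h _ v hv hr => hr ▸ h v hv⟩

section Cones

variable {ι : Type} [Fintype ι] {g : ι → EuclideanSpace ℝ (Fin n)}
  {ζ : ι → EuclideanSpace ℝ (Fin n) → ℝ}

theorem normalCone_subset_Pcone (hne : ∀ i, (subdiff (ζ i) x).Nonempty) :
    normalCone X x ⊆ Pcone g ζ X x := fun w hw => by
  choose v₀ hv₀ using hne
  exact ⟨0, v₀, w, fun _ => le_rfl, hv₀, hw, by simp⟩

theorem add_mem_Pcone [DecidableEq ι] (hne : ∀ i, (subdiff (ζ i) x).Nonempty) {i : ι}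
    {v : EuclideanSpace ℝ (Fin n)} (hv : v ∈ subdiff (ζ i) x) : g i + v ∈ Pcone g ζ X x := by
  choose v₀ hv₀ using hne
  refine ⟨Pi.single i 1, Function.update v₀ i v, 0, fun j => ?_, fun j => ?_,
    fun y _ => by simp, ?_⟩
  · by_cases h : j = i <;> simp [h]
  · by_cases h : j = i
    · subst h; simpa using hv
    · simpa [h] using hv₀ j
  · rw [add_zero, Fintype.sum_eq_single i fun j hj => by simp [hj]]
    simp

theorem mem_polarCone_Pcone_iff (hne : ∀ i, (subdiff (ζ i) x).Nonempty) :
    d ∈ polarCone (Pcone g ζ X x) ↔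
      d ∈ polarCone (normalCone X x) ∧ ∀ i, ∀ v ∈ subdiff (ζ i) x, ⟪g i + v, d⟫ ≤ 0 := by
  classical
  refine ⟨fun hd => ⟨fun w hw => hd w (normalCone_subset_Pcone hne hw),
    fun i v hv => hd _ (add_mem_Pcone hne hv)⟩, ?_⟩
  rintro ⟨hN, hsub⟩ _ ⟨lam, v, w, hlam, hv, hw, rfl⟩
  rw [inner_add_left, sum_inner]
  have hterms : ∑ i, ⟪lam i • (g i + v i), d⟫ ≤ 0 := Finset.sum_nonpos fun i _ => by
    rw [real_inner_smul_left]
    exact mul_nonpos_of_nonneg_of_nonpos (hlam i) (hsub i (v i) (hv i))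
  linarith [hN w hw]

theorem mem_Ccone_iff (hX : Convex ℝ X) (hx : x ∈ X) (hne : ∀ i, (subdiff (ζ i) x).Nonempty) :
    d ∈ Ccone g ζ X x ↔
      d ∈ polarCone (normalCone X x) ∧ ∀ i, ∀ v ∈ subdiff (ζ i) x, ⟪g i + v, d⟫ ≤ 0 := by
  simp only [Ccone, mem_ofPred_eq, tangentConeConvex_eq_polarCone_normalCone hX hx,
    ← le_neg_iff_add_nonpos_left, dirDerivSub_le_iff (hne _), inner_add_left]

end Cones

end Euclidean

theorem polar_Pcone_eq_Ccone_general {n : ℕ} {ι : Type} [Fintype ι]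
    (X : Set (EuclideanSpace ℝ (Fin n))) (hXconv : Convex ℝ X)
    (xbar : EuclideanSpace ℝ (Fin n)) (hxbar : xbar ∈ X)
    (g : ι → EuclideanSpace ℝ (Fin n)) (ζ : ι → EuclideanSpace ℝ (Fin n) → ℝ)
    (hζ : ∀ i, ConvexOn ℝ Set.univ (ζ i)) :
    polarCone (Pcone g ζ X xbar) = Ccone g ζ X xbar := by
  have hne i := subdiff_nonempty (hζ i) xbar
  ext d
  rw [mem_polarCone_Pcone_iff hne, mem_Ccone_iff hXconv hxbar hne]

/-- The polar of `P` equals `C`. -/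
theorem polar_Pcone_eq_Ccone {n : ℕ} {ι : Type} [Fintype ι]
    (X : Set (EuclideanSpace ℝ (Fin n))) (hXc : IsClosed X) (hXconv : Convex ℝ X)
    (xbar : EuclideanSpace ℝ (Fin n)) (hxbar : xbar ∈ X)
    (g : ι → EuclideanSpace ℝ (Fin n)) (ζ : ι → EuclideanSpace ℝ (Fin n) → ℝ)
    (hζ : ∀ i, ConvexOn ℝ Set.univ (ζ i)) :
    polarCone (Pcone g ζ X xbar) = Ccone g ζ X xbar :=
  polar_Pcone_eq_Ccone_general X hXconv xbar hxbar g ζ hζ
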